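/- arXiv:2102.12352 — 4 statements merged into one kernel-verified Lean document; each statement's English description precedes it below -/
import Mathlib

section
/- Let S ⊆ ℝⁿ and let μ be a Borel probability measure on ℝⁿ whose support is contained in S. If the expectation E_μ[X] exists (each coordinate integral is finite), then E_μ[X] belongs to the convex hull of S. -/
open MeasureTheory Set Filter Topology
open scoped BigOperators ENNReal

noncomputable section

/-- The support of a measure: points all of whose open neighborhoods have
positive measure. -/
def msupport {E : Type*} [TopologicalSpace E] [MeasurableSpace E]
    (μ : Measure E) : Set E :=
  {x | ∀ U : Set E, IsOpen U → x ∈ U → μ U ≠ 0}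

/-!
Induction on the dimension. Let `b` be the mean of a probability measure carried by a convex set
`s`, and suppose `b ∉ s`. Either `s` has interior, and a functional `φ` separating `b` from it
satisfies `φ ≤ φ b` on `s`; as `φ` has mean `φ b`, it equals `φ b` almost everywhere. Or `s` lies
in a proper affine subspace, which is closed and hence contains `b`, and any nonzero `φ` vanishing
on its direction is again a.e. equal to `φ b`. In both cases the measure is carried by the
hyperplane `φ = φ b`, a translate of `ker φ`, where the induction hypothesis puts `b` in `s`.
-/

theorem msupport_eq_support {X : Type*} [TopologicalSpace X] [MeasurableSpace X]
    (μ : Measure X) : msupport μ = μ.support := by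
  ext x
  simp [msupport, Measure.support_eq_forall_isOpen, pos_iff_ne_zero, imp.swap]

section FiniteDimensional

variable {Ω E : Type*} [MeasurableSpace Ω] {μ : Measure Ω} [IsProbabilityMeasure μ]
  [NormedAddCommGroup E] [NormedSpace ℝ E] [FiniteDimensional ℝ E] {s : Set E} {f : Ω → E}

theorem ae_eq_integral_of_ae_le_integral {g : Ω → ℝ} (hg : Integrable g μ)
    (hle : ∀ᵐ ω ∂μ, g ω ≤ ∫ ω, g ω ∂μ) : ∀ᵐ ω ∂μ, g ω = ∫ ω, g ω ∂μ :=
  (integral_eq_iff_of_ae_le hg (integrable_const _) hle).1 (by simp)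

theorem exists_ne_zero_ae_apply_eq_of_integral_notMem (hs : Convex ℝ s)
    (hf : ∀ᵐ ω ∂μ, f ω ∈ s) (hfi : Integrable f μ) (hb : ∫ ω, f ω ∂μ ∉ s) :
    ∃ φ : StrongDual ℝ E, φ ≠ 0 ∧ ∀ᵐ ω ∂μ, φ (f ω) = φ (∫ ω, f ω ∂μ) := by
  have := FiniteDimensional.complete ℝ E
  by_cases hint : (interior s).Nonempty
  · obtain ⟨φ, hφ, hle⟩ := geometric_hahn_banach_of_nonempty_interior_point hs
      (fun h => hb (interior_subset h)) hint
    refine ⟨φ, hφ, ?_⟩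
    have hφf := φ.integral_comp_comm hfi
    simpa [hφf] using ae_eq_integral_of_ae_le_integral (φ.integrable_comp hfi)
      (hf.mono fun ω hω => hφf ▸ hle _ hω)
  · set A := affineSpan ℝ s
    obtain ⟨ω₀, hω₀⟩ := hf.exists
    have hA : A.direction < ⊤ := by
      rw [lt_top_iff_ne_top, Ne, AffineSubspace.direction_eq_top_iff_of_nonempty
        ⟨f ω₀, subset_affineSpan ℝ s hω₀⟩, ← hs.interior_nonempty_iff_affineSpan_eq_top]
      exact hint
    obtain ⟨φ, hφ, hker⟩ := A.direction.exists_le_ker_of_lt_top hA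
    have hfA : ∀ᵐ ω ∂μ, f ω ∈ A := hf.mono fun ω hω => subset_affineSpan ℝ s hω
    have hbA : ∫ ω, f ω ∂μ ∈ A :=
      A.convex.integral_mem (AffineSubspace.closed_of_finiteDimensional A) hfA hfi
    refine ⟨LinearMap.toContinuousLinearMap φ, by simpa using hφ, hfA.mono fun ω hω => ?_⟩
    rw [LinearMap.coe_toContinuousLinearMap', ← sub_eq_zero, ← map_sub]
    exact hker (AffineSubspace.vsub_mem_direction hω hbA)

theorem Convex.integral_mem_of_finiteDimensional (hs : Convex ℝ s)
    (hf : ∀ᵐ ω ∂μ, f ω ∈ s) (hfi : Integrable f μ) : ∫ ω, f ω ∂μ ∈ s := by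
  induction hd : Module.finrank ℝ E using Nat.strong_induction_on generalizing E s f with
  | _ d ih =>
  have := FiniteDimensional.complete ℝ E
  by_contra hb
  obtain ⟨φ, hφ, hφf⟩ := exists_ne_zero_ae_apply_eq_of_integral_notMem hs hf hfi hb
  set b := ∫ ω, f ω ∂μ
  obtain ⟨P, hP⟩ := φ.ker_closedComplemented_of_finiteDimensional_range
  have hK : Module.finrank ℝ φ.ker < d := by
    have hφK : φ.ker ≠ ⊤ := fun h =>
      hφ (ContinuousLinearMap.coe_injective (by simpa using LinearMap.ker_eq_top.1 h))
    exact hd ▸ Submodule.finrank_lt hφK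
  have hgi : Integrable (fun ω => P (f ω - b)) μ :=
    P.integrable_comp (hfi.sub (integrable_const b))
  have hg : ∀ᵐ ω ∂μ, P (f ω - b) ∈ {y : φ.ker | b + y ∈ s} := by
    filter_upwards [hf, hφf] with ω hω hφω
    have hker : f ω - b ∈ φ.ker := by simp [hφω]
    simpa [hP ⟨_, hker⟩] using hω
  have hmean : ∫ ω, P (f ω - b) ∂μ = 0 := by
    rw [P.integral_comp_comm (φ := fun ω => f ω - b) (hfi.sub (integrable_const b)),
      integral_sub hfi (integrable_const b)]
    simp [b]
  have hb' := ih _ hK ((hs.translate_preimage_right b).linear_preimage φ.ker.subtype) hg hgi rfl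
  rw [Set.mem_preimage, hmean] at hb'
  exact hb (by simpa using hb')

end FiniteDimensional

/-- if the expectation of a probability measure with support in `S`
exists, it belongs to the convex hull of `S`. -/
theorem expectation_mem_convexHull {n : ℕ} (S : Set (Fin n → ℝ))
    (μ : Measure (Fin n → ℝ)) (hμ : IsProbabilityMeasure μ)
    (hsupp : msupport μ ⊆ S)
    (hint : ∀ i, Integrable (fun x => x i) μ) :
    (fun i => ∫ x, x i ∂μ) ∈ convexHull ℝ S := by
  have hmean : (fun i => ∫ x, x i ∂μ) = ∫ x, x ∂μ :=
    funext fun i => (eval_integral (f := id) hint i).symm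
  have hS : ∀ᵐ x ∂μ, x ∈ convexHull ℝ S := by
    filter_upwards [msupport_eq_support μ ▸ μ.support_mem_ae] with x hx
    exact subset_convexHull ℝ S (hsupp hx)
  rw [hmean]
  exact (convex_convexHull ℝ S).integral_mem_of_finiteDimensional hS (Integrable.of_eval hint)
end
end

section
/- Let f₁,…,f_m, g : ℝⁿ → ℝ be Borel measurable, S ⊆ ℝⁿ, φ ∈ ℝᵐ, and suppose σ₊ = sup{z : (φ,z) ∈ γ(S,φ)} is finite and the point (φ, σ₊) belongs to γ(S,φ). Then there exist α ∈ ℝᵐ, β ≥ 0, c ∈ ℝ with (α,β) ≠ 0 and ⟨α, f(x)⟩ + β·g(x) + c ≤ 0 for all x ∈ S, and a measure μ₊ ∈ M_{m+1}(S,φ) with support s₊ (a set of at most m+1 points) such that E_{μ₊}[g(X)] = σ₊ and ⟨α, f(x)⟩ + β·g(x) + c = 0 for every x ∈ s₊. -/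
open MeasureTheory Set Filter Topology
open scoped BigOperators ENNReal

noncomputable section

/-- `M(S,φ)`: Borel probability measures with support contained in `S`,
with `E[f i] = φ i` for all `i` and `E[g]` finite. -/
def MC (n m : ℕ) (f : (Fin n → ℝ) → Fin m → ℝ) (g : (Fin n → ℝ) → ℝ)
    (S : Set (Fin n → ℝ)) (φ : Fin m → ℝ) : Set (Measure (Fin n → ℝ)) :=
  {μ | IsProbabilityMeasure μ ∧ msupport μ ⊆ S ∧
    (∀ i, Integrable (fun x => f x i) μ) ∧ (∀ i, ∫ x, f x i ∂μ = φ i) ∧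
    Integrable g μ}

/-- `M_k(S,φ)`: members of `M(S,φ)` whose support has at most `k` points. -/
def MCk (n m : ℕ) (f : (Fin n → ℝ) → Fin m → ℝ) (g : (Fin n → ℝ) → ℝ)
    (S : Set (Fin n → ℝ)) (φ : Fin m → ℝ) (k : ℕ) : Set (Measure (Fin n → ℝ)) :=
  {μ | μ ∈ MC n m f g S φ ∧ (msupport μ).encard ≤ (k : ℕ∞)}

/-- `γ(S,φ)`: intersection of the convex hull of `Γ(S)` with the line `{φ} × ℝ`,
where `Γ x = (f x, g x) ∈ ℝ^m × ℝ`. -/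
def gam (n m : ℕ) (f : (Fin n → ℝ) → Fin m → ℝ) (g : (Fin n → ℝ) → ℝ)
    (S : Set (Fin n → ℝ)) (φ : Fin m → ℝ) : Set ((Fin m → ℝ) × ℝ) :=
  convexHull ℝ ((fun x => (f x, g x)) '' S) ∩ {p | p.1 = φ}

/-! Separating the open vertical ray `{φ} × (σ₊, ∞)` from the convex hull `C` of `Γ(S)` gives a
nonzero functional `L (y, t) = ⟨α, y⟩ + β t` with `β ≥ 0` whose maximum on `C` is attained at
`(φ, σ₊)`. By Carathéodory, `(φ, σ₊)` is a convex combination with positive weights `wᵢ` of affinely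
independent points `Γ(xᵢ)`, `xᵢ ∈ S`. As `L` is maximal at their barycenter, every `Γ(xᵢ)` lies on
the hyperplane `L = L (φ, σ₊)`, which has dimension `m`, so there are at most `m + 1` of them, and
`μ₊ = ∑ wᵢ δ_{xᵢ}` is the required measure. -/

section Separation

open scoped Pointwise

variable {E : Type*} [NormedAddCommGroup E] [NormedSpace ℝ E] [FiniteDimensional ℝ E]

theorem Convex.exists_ne_zero_nonneg_of_zero_notMem {D : Set E} (hD : Convex ℝ D)
    (hne : D.Nonempty) (h0 : (0 : E) ∉ D) :
    ∃ L : E →L[ℝ] ℝ, L ≠ 0 ∧ ∀ d ∈ D, 0 ≤ L d := by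
  by_cases hint : (interior D).Nonempty
  · obtain ⟨L, hL, hle⟩ := geometric_hahn_banach_of_nonempty_interior_point hD
      (fun h => h0 (interior_subset h)) hint
    exact ⟨-L, neg_ne_zero.2 hL, fun d hd => by simpa using hle d hd⟩
  -- Otherwise `D` spans a proper affine subspace, on which some nonzero functional is constant.
  obtain ⟨d₀, hd₀⟩ := hne
  have hdir : (affineSpan ℝ D).direction < ⊤ := by
    rw [lt_top_iff_ne_top, Ne, AffineSubspace.direction_eq_top_iff_of_nonempty
      ((affineSpan_nonempty ℝ).2 ⟨d₀, hd₀⟩), ← hD.interior_nonempty_iff_affineSpan_eq_top]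
    exact hint
  obtain ⟨f, hf0, hker⟩ := Submodule.exists_le_ker_of_lt_top _ hdir
  have hconst : ∀ d ∈ D, f d = f d₀ := fun d hd => by
    have := hker (AffineSubspace.vsub_mem_direction (subset_affineSpan ℝ D hd)
      (subset_affineSpan ℝ D hd₀))
    rwa [LinearMap.mem_ker, vsub_eq_sub, map_sub, sub_eq_zero] at this
  have hL0 : LinearMap.toContinuousLinearMap f ≠ 0 := by simpa using hf0
  rcases le_total 0 (f d₀) with h | h
  · exact ⟨_, hL0, fun d hd => by simpa [hconst d hd] using h⟩
  · exact ⟨-_, neg_ne_zero.2 hL0, fun d hd => by simpa [hconst d hd] using h⟩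

theorem Convex.exists_supporting_functional_of_top_of_slice {C : Set (E × ℝ)}
    (hC : Convex ℝ C) {x : E} {σ : ℝ} (hxσ : (x, σ) ∈ C) (hmax : ∀ t, (x, t) ∈ C → t ≤ σ) :
    ∃ L : E × ℝ →L[ℝ] ℝ, L ≠ 0 ∧ 0 ≤ L (0, 1) ∧ ∀ q ∈ C, L q ≤ L (x, σ) := by
  have hray : Convex ℝ ({x} ×ˢ Ioi σ) := (convex_singleton x).prod (convex_Ioi σ)
  have hne : ({x} ×ˢ Ioi σ - C).Nonempty :=
    ⟨_, sub_mem_sub (mk_mem_prod rfl (lt_add_one σ)) hxσ⟩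
  have h0 : (0 : E × ℝ) ∉ {x} ×ˢ Ioi σ - C := by
    rintro ⟨r, ⟨hr₁, hr₂⟩, q, hq, hrq⟩
    obtain rfl : r = q := sub_eq_zero.1 hrq
    obtain ⟨y, t⟩ := r
    obtain rfl : y = x := hr₁
    exact (hmax t hq).not_gt hr₂
  obtain ⟨L, hL0, hL⟩ := (hray.sub hC).exists_ne_zero_nonneg_of_zero_notMem hne h0
  have hsep : ∀ q ∈ C, ∀ t ∈ Ioi σ, L q ≤ L (x, t) := fun q hq t ht => by
    simpa [sub_nonneg] using hL _ (sub_mem_sub (mk_mem_prod rfl ht) hq)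
  refine ⟨L, hL0, ?_, fun q hq => ?_⟩
  · have := hsep _ hxσ (σ + 1) (lt_add_one σ)
    rw [show ((x, σ + 1) : E × ℝ) = (x, σ) + (0, 1) by simp, map_add] at this
    linarith
  · have hclosed : IsClosed {t : ℝ | L q ≤ L (x, t)} :=
      isClosed_le continuous_const (by fun_prop)
    exact closure_minimal (hsep q hq) hclosed (closure_Ioi σ ▸ self_mem_Ici)

end Separation

universe u

theorem AffineIndependent.card_le_finrank_of_forall_apply_eq {k V ι : Type*} [Field k]
    [AddCommGroup V] [Module k V] [FiniteDimensional k V] [Fintype ι] {z : ι → V}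
    (hz : AffineIndependent k z) {L : V →ₗ[k] k} (hL : L ≠ 0) {c : k}
    (hzc : ∀ i, L (z i) = c) : Fintype.card ι ≤ Module.finrank k V := by
  have hspan : vectorSpan k (range z) ≤ LinearMap.ker L := by
    rw [vectorSpan_def, Submodule.span_le]
    rintro _ ⟨_, ⟨i, rfl⟩, _, ⟨j, rfl⟩, rfl⟩
    simp [hzc]
  have hker : Module.finrank k (LinearMap.ker L) < Module.finrank k V :=
    Submodule.finrank_lt (by rwa [Ne, LinearMap.ker_eq_top])
  have := Submodule.finrank_mono hspan
  have := hz.card_le_finrank_succ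
  omega

theorem Finset.eq_of_sum_mul_eq_of_le {ι : Type*} {s : Finset ι} {w a : ι → ℝ} {c : ℝ}
    (hw : ∀ i ∈ s, 0 < w i) (hw1 : ∑ i ∈ s, w i = 1) (hle : ∀ i ∈ s, a i ≤ c)
    (hsum : ∑ i ∈ s, w i * a i = c) : ∀ i ∈ s, a i = c := by
  have hzero : ∑ i ∈ s, w i * (c - a i) = 0 := by
    simp only [mul_sub, Finset.sum_sub_distrib, ← Finset.sum_mul, hw1, hsum]
    ring
  intro i hi
  have := (Finset.sum_eq_zero_iff_of_nonneg fun j hj =>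
    mul_nonneg (hw j hj).le (sub_nonneg.2 (hle j hj))).1 hzero i hi
  have := (mul_eq_zero.1 this).resolve_left (hw i hi).ne'
  linarith

theorem exists_affineIndependent_of_mem_convexHull_image {α : Type*} {E : Type u} [AddCommGroup E]
    [Module ℝ E] {Γ : α → E} {S : Set α} {p : E} (hp : p ∈ convexHull ℝ (Γ '' S)) :
    ∃ (ι : Type u) (_ : Fintype ι) (x : ι → α) (w : ι → ℝ), (∀ i, x i ∈ S) ∧
      AffineIndependent ℝ (Γ ∘ x) ∧ (∀ i, 0 < w i) ∧ ∑ i, w i = 1 ∧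
      ∑ i, w i • Γ (x i) = p := by
  obtain ⟨ι, _, z, w, hzS, hz, hw, hw1, hwz⟩ := eq_pos_convex_span_of_mem_convexHull hp
  choose x hxS hxz using fun i => hzS (mem_range_self i)
  obtain rfl : Γ ∘ x = z := funext hxz
  exact ⟨ι, ‹_›, x, w, hxS, hz, hw, hw1, hwz⟩

theorem ContinuousLinearMap.apply_eq_sum_mul_add_mul {ι : Type*} [Fintype ι] [DecidableEq ι]
    (L : (ι → ℝ) × ℝ →L[ℝ] ℝ) (p : (ι → ℝ) × ℝ) :
    L p = ∑ i, L (Pi.single i 1, 0) * p.1 i + L (0, 1) * p.2 := by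
  have hp : p = ∑ i, p.1 i • ((Pi.single i 1, 0) : (ι → ℝ) × ℝ) + p.2 • (0, 1) := by
    ext j
    · simp [Prod.fst_sum, Finset.sum_apply, Pi.single_apply]
    · simp [Prod.snd_sum]
  conv_lhs => rw [hp]
  simp only [map_add, map_sum, map_smul, smul_eq_mul, mul_comm]

section WeightedDiracs

variable {α ι : Type*} [MeasurableSpace α] [Fintype ι]

def weightedDiracs (w : ι → ℝ) (x : ι → α) : Measure α :=
  ∑ i, ENNReal.ofReal (w i) • Measure.dirac (x i)

theorem isProbabilityMeasure_weightedDiracs {w : ι → ℝ} (x : ι → α) (hw : ∀ i, 0 ≤ w i)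
    (hw1 : ∑ i, w i = 1) : IsProbabilityMeasure (weightedDiracs w x) := by
  constructor
  simp [weightedDiracs, ← ENNReal.ofReal_sum_of_nonneg fun i _ => hw i, hw1]

variable [MeasurableSingletonClass α]

theorem integrable_weightedDiracs (h : α → ℝ) (w : ι → ℝ) (x : ι → α) :
    Integrable h (weightedDiracs w x) :=
  integrable_finsetSum_measure.2 fun _ _ =>
    (integrable_dirac enorm_lt_top).smul_measure ENNReal.ofReal_ne_top

theorem integral_weightedDiracs (h : α → ℝ) {w : ι → ℝ} (x : ι → α) (hw : ∀ i, 0 ≤ w i) :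
    ∫ y, h y ∂weightedDiracs w x = ∑ i, w i * h (x i) := by
  rw [weightedDiracs, integral_finsetSum_measure fun i _ =>
    (integrable_dirac enorm_lt_top).smul_measure ENNReal.ofReal_ne_top]
  simp [integral_smul_measure, ENNReal.toReal_ofReal (hw _)]

theorem msupport_weightedDiracs_subset [TopologicalSpace α] [T1Space α] (w : ι → ℝ)
    (x : ι → α) : msupport (weightedDiracs w x) ⊆ range x := by
  intro y hy
  by_contra hyx
  refine hy _ (finite_range x).isClosed.isOpen_compl hyx ?_
  simp [weightedDiracs, Measure.dirac_apply]

theorem encard_msupport_weightedDiracs_le [TopologicalSpace α] [T1Space α] (w : ι → ℝ)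
    (x : ι → α) : (msupport (weightedDiracs w x)).encard ≤ Fintype.card ι :=
  calc (msupport (weightedDiracs w x)).encard ≤ (x '' univ).encard :=
        encard_le_encard (image_univ ▸ msupport_weightedDiracs_subset w x)
    _ ≤ Fintype.card ι := by simpa using encard_image_le x univ

end WeightedDiracs

theorem weightedDiracs_mem_MCk {n m k : ℕ} {f : (Fin n → ℝ) → Fin m → ℝ}
    {g : (Fin n → ℝ) → ℝ} {S : Set (Fin n → ℝ)} {φ : Fin m → ℝ} {ι : Type*} [Fintype ι]
    {x : ι → Fin n → ℝ} {w : ι → ℝ} (hxS : ∀ i, x i ∈ S) (hw : ∀ i, 0 ≤ w i)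
    (hw1 : ∑ i, w i = 1) (hφ : ∑ i, w i • f (x i) = φ) (hk : Fintype.card ι ≤ k) :
    weightedDiracs w x ∈ MCk n m f g S φ k := by
  refine ⟨⟨isProbabilityMeasure_weightedDiracs x hw hw1,
    (msupport_weightedDiracs_subset w x).trans (range_subset_iff.2 hxS),
    fun _ => integrable_weightedDiracs _ w x, fun j => ?_, integrable_weightedDiracs g w x⟩,
    (encard_msupport_weightedDiracs_le w x).trans (by exact_mod_cast hk)⟩
  simp [integral_weightedDiracs _ x hw, ← hφ, Finset.sum_apply]

theorem supporting_hyperplane_attained_general {n m : ℕ}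
    (f : (Fin n → ℝ) → Fin m → ℝ) (g : (Fin n → ℝ) → ℝ)
    (S : Set (Fin n → ℝ)) (φ : Fin m → ℝ) (σp : ℝ)
    (hσ : (⨆ p ∈ gam n m f g S φ, ((p.2 : ℝ) : EReal)) = (σp : EReal))
    (hmem : ((φ, σp) : (Fin m → ℝ) × ℝ) ∈ gam n m f g S φ) :
    ∃ (α : Fin m → ℝ) (β c : ℝ), 0 ≤ β ∧
      ((α, β) : (Fin m → ℝ) × ℝ) ≠ 0 ∧
      (∀ x ∈ S, (∑ i, α i * f x i) + β * g x + c ≤ 0) ∧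
      ∃ μ ∈ MCk n m f g S φ (m + 1),
        (∫ x, g x ∂μ) = σp ∧
        ∀ x ∈ msupport μ, (∑ i, α i * f x i) + β * g x + c = 0 := by
  set Γ : (Fin n → ℝ) → (Fin m → ℝ) × ℝ := fun x => (f x, g x)
  have hmax : ∀ t, (φ, t) ∈ convexHull ℝ (Γ '' S) → t ≤ σp := fun t ht =>
    EReal.coe_le_coe_iff.1 (hσ ▸ le_iSup₂ (f := fun p (_ : p ∈ gam n m f g S φ) =>
      ((p.2 : ℝ) : EReal)) (φ, t) ⟨ht, rfl⟩)
  obtain ⟨L, hL0, hβ, hLle⟩ :=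
    (convex_convexHull ℝ _).exists_supporting_functional_of_top_of_slice hmem.1 hmax
  obtain ⟨ι, _, x, w, hxS, hind, hw, hw1, hwΓ⟩ :=
    exists_affineIndependent_of_mem_convexHull_image hmem.1
  have hLΓ : ∀ y ∈ S, L (Γ y) ≤ L (φ, σp) := fun y hy =>
    hLle _ (subset_convexHull ℝ _ (mem_image_of_mem Γ hy))
  have hLx : ∀ i, L (Γ (x i)) = L (φ, σp) := fun i =>
    Finset.eq_of_sum_mul_eq_of_le (fun i _ => hw i) hw1 (fun i _ => hLΓ _ (hxS i))
      (by rw [← hwΓ, map_sum]; exact Finset.sum_congr rfl fun i _ => (L.map_smul _ _).symm) i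
      (Finset.mem_univ i)
  have hcard : Fintype.card ι ≤ m + 1 := by
    simpa using hind.card_le_finrank_of_forall_apply_eq (L := (L : _ →ₗ[ℝ] ℝ))
      (by exact_mod_cast hL0) hLx
  have hform := L.apply_eq_sum_mul_add_mul
  refine ⟨fun i => L (Pi.single i 1, 0), L (0, 1), -L (φ, σp), hβ, fun h => hL0 ?_,
    fun y hy => ?_, weightedDiracs w x, weightedDiracs_mem_MCk hxS (fun i => (hw i).le) hw1
      (by simpa [Prod.fst_sum] using congrArg Prod.fst hwΓ) hcard, ?_, fun y hy => ?_⟩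
  · obtain ⟨hα, hβ'⟩ := Prod.mk_eq_zero.1 h
    refine ContinuousLinearMap.ext fun p => ?_
    simp [hform p, hβ', funext_iff.1 hα]
  · linarith [hform (Γ y), hLΓ y hy]
  · simpa [integral_weightedDiracs _ x fun i => (hw i).le, Prod.snd_sum] using
      congrArg Prod.snd hwΓ
  · obtain ⟨i, rfl⟩ := msupport_weightedDiracs_subset w x hy
    linarith [hform (Γ (x i)), hLx i]

/-- attained supremum case; there is a maximizing measure with at
most `m+1` support points, supported where the hyperplane touches. -/
theorem supporting_hyperplane_attained {n m : ℕ}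
    (f : (Fin n → ℝ) → Fin m → ℝ) (g : (Fin n → ℝ) → ℝ)
    (hf : ∀ i, Measurable fun x => f x i) (hg : Measurable g)
    (S : Set (Fin n → ℝ)) (φ : Fin m → ℝ) (σp : ℝ)
    (hσ : (⨆ p ∈ gam n m f g S φ, ((p.2 : ℝ) : EReal)) = (σp : EReal))
    (hmem : ((φ, σp) : (Fin m → ℝ) × ℝ) ∈ gam n m f g S φ) :
    ∃ (α : Fin m → ℝ) (β c : ℝ), 0 ≤ β ∧
      ((α, β) : (Fin m → ℝ) × ℝ) ≠ 0 ∧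
      (∀ x ∈ S, (∑ i, α i * f x i) + β * g x + c ≤ 0) ∧
      ∃ μ ∈ MCk n m f g S φ (m + 1),
        (∫ x, g x ∂μ) = σp ∧
        ∀ x ∈ msupport μ, (∑ i, α i * f x i) + β * g x + c = 0 :=
  supporting_hyperplane_attained_general f g S φ σp hσ hmem

end
end

section
/- Let f₁,…,f_m, g : ℝⁿ → ℝ be Borel measurable, S ⊆ ℝⁿ, and φ ∈ ℝᵐ. Then φ does not belong to the closure of D(S) = {ψ ∈ ℝᵐ : M(S,ψ) ≠ ∅} if and only if there exist α ∈ ℝᵐ and ε > 0 such that ⟨α, f(x) − φ⟩ > ε for all x ∈ S, where f = (f₁,…,f_m). -/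
open MeasureTheory Set Filter Topology
open scoped BigOperators ENNReal

noncomputable section

/-- The complement of the measure support is null (second countable space). -/
lemma msupport_compl_null {E : Type*} [TopologicalSpace E] [MeasurableSpace E]
    [SecondCountableTopology E] (μ : Measure E) : μ (msupport μ)ᶜ = 0 := by
  have hset : (msupport μ)ᶜ = ⋃₀ {U : Set E | IsOpen U ∧ μ U = 0} := by
    ext x
    simp only [msupport, mem_compl_iff, mem_setOf_eq, mem_sUnion]
    constructor
    · intro h
      push_neg at h
      obtain ⟨U, hU, hxU, hμU⟩ := h
      exact ⟨U, ⟨hU, hμU⟩, hxU⟩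
    · rintro ⟨U, ⟨hU, hμU⟩, hxU⟩ h
      exact h U hU hxU hμU
  obtain ⟨T, hTc, hTsub, hTeq⟩ :=
    TopologicalSpace.isOpen_sUnion_countable {U : Set E | IsOpen U ∧ μ U = 0}
      (fun U hU => hU.1)
  rw [hset, ← hTeq]
  exact (measure_sUnion_null_iff hTc).2 fun s hs => (hTsub hs).2

lemma integrable_dirac' {E : Type*} [MeasurableSpace E] {h : E → ℝ}
    (hh : Measurable h) (a : E) : Integrable h (Measure.dirac a) := by
  refine ⟨hh.stronglyMeasurable.aestronglyMeasurable, ?_⟩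
  rw [HasFiniteIntegral, lintegral_dirac' a (by measurability)]
  exact ENNReal.coe_lt_top

/-- Dirac measure at a point of `S` witnesses `f x ∈ D(S)`. -/
lemma dirac_mem_MC {n m : ℕ} (f : (Fin n → ℝ) → Fin m → ℝ) (g : (Fin n → ℝ) → ℝ)
    (hf : ∀ i, Measurable fun x => f x i) (hg : Measurable g)
    (S : Set (Fin n → ℝ)) {x : Fin n → ℝ} (hx : x ∈ S) :
    Measure.dirac x ∈ MC n m f g S (f x) := by
  refine ⟨Measure.dirac.isProbabilityMeasure, ?_, fun i => integrable_dirac' (hf i) x,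
    fun i => ?_, integrable_dirac' hg x⟩
  · intro y hy
    by_contra hyS
    have hyx : y ≠ x := fun h => hyS (h ▸ hx)
    have h0 : Measure.dirac x ({x}ᶜ) = 0 := by
      rw [Measure.dirac_apply' _ (MeasurableSet.compl (measurableSet_singleton x))]
      simp
    exact hy {x}ᶜ isOpen_compl_singleton hyx h0
  · exact integral_dirac' _ _ (hf i).stronglyMeasurable

/-- The feasible set `D(S)` is convex. -/
lemma feasible_convex {n m : ℕ} (f : (Fin n → ℝ) → Fin m → ℝ) (g : (Fin n → ℝ) → ℝ)
    (S : Set (Fin n → ℝ)) :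
    Convex ℝ {ψ : Fin m → ℝ | (MC n m f g S ψ).Nonempty} := by
  rintro ψ₁ ⟨μ₁, hp₁, hs₁, hi₁, he₁, hg₁⟩ ψ₂ ⟨μ₂, hp₂, hs₂, hi₂, he₂, hg₂⟩ a b ha hb hab
  refine ⟨ENNReal.ofReal a • μ₁ + ENNReal.ofReal b • μ₂, ?_, ?_, ?_, ?_, ?_⟩
  · constructor
    have h1 := hp₁.measure_univ
    have h2 := hp₂.measure_univ
    simp only [Measure.add_apply, Measure.smul_apply, smul_eq_mul, h1, h2, mul_one]
    rw [← ENNReal.ofReal_add ha hb, hab, ENNReal.ofReal_one]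
  · intro y hy
    by_contra hyS
    have h1 : y ∉ msupport μ₁ := fun h => hyS (hs₁ h)
    have h2 : y ∉ msupport μ₂ := fun h => hyS (hs₂ h)
    simp only [msupport, mem_setOf_eq, not_forall] at h1 h2
    obtain ⟨U₁, hU₁, hyU₁, hμU₁⟩ := h1
    obtain ⟨U₂, hU₂, hyU₂, hμU₂⟩ := h2
    push_neg at hμU₁ hμU₂
    have hμU₁' : μ₁ (U₁ ∩ U₂) = 0 :=
      measure_mono_null (inter_subset_left) (by simpa using hμU₁)
    have hμU₂' : μ₂ (U₁ ∩ U₂) = 0 :=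
      measure_mono_null (inter_subset_right) (by simpa using hμU₂)
    refine hy (U₁ ∩ U₂) (hU₁.inter hU₂) ⟨hyU₁, hyU₂⟩ ?_
    simp [Measure.add_apply, Measure.smul_apply, hμU₁', hμU₂']
  · intro i
    exact ((hi₁ i).smul_measure ENNReal.ofReal_ne_top).add_measure
      ((hi₂ i).smul_measure ENNReal.ofReal_ne_top)
  · intro i
    rw [integral_add_measure ((hi₁ i).smul_measure ENNReal.ofReal_ne_top)
      ((hi₂ i).smul_measure ENNReal.ofReal_ne_top),
      integral_smul_measure, integral_smul_measure, he₁ i, he₂ i,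
      ENNReal.toReal_ofReal ha, ENNReal.toReal_ofReal hb]
    simp [smul_eq_mul]
  · exact (hg₁.smul_measure ENNReal.ofReal_ne_top).add_measure
      (hg₂.smul_measure ENNReal.ofReal_ne_top)

/-- `φ` is outside the closure of the feasible set iff a linear
functional uniformly separates `f(S)` from `φ`. -/
theorem not_mem_closure_feasible_iff {n m : ℕ}
    (f : (Fin n → ℝ) → Fin m → ℝ) (g : (Fin n → ℝ) → ℝ)
    (hf : ∀ i, Measurable fun x => f x i) (hg : Measurable g)
    (S : Set (Fin n → ℝ)) (φ : Fin m → ℝ) :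
    φ ∉ closure {ψ : Fin m → ℝ | (MC n m f g S ψ).Nonempty} ↔
      ∃ (α : Fin m → ℝ) (ε : ℝ), 0 < ε ∧
        ∀ x ∈ S, ε < ∑ i, α i * (f x i - φ i) := by
  set D := {ψ : Fin m → ℝ | (MC n m f g S ψ).Nonempty} with hD
  constructor
  · intro hφ
    obtain ⟨L, u, hLφ, hL⟩ := geometric_hahn_banach_point_closed
      (feasible_convex f g S).closure isClosed_closure hφ
    set α : Fin m → ℝ := fun i => L (Pi.single i 1) with hα
    have hLsum : ∀ ψ : Fin m → ℝ, L ψ = ∑ i, ψ i * α i := by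
      intro ψ
      have : ψ = ∑ i, ψ i • (Pi.single i 1 : Fin m → ℝ) := by
        ext j; simp [Pi.single_apply, Finset.sum_apply]
      conv_lhs => rw [this]
      rw [map_sum]
      simp [hα, smul_eq_mul]
    refine ⟨α, (u - L φ) / 2, by linarith, fun x hx => ?_⟩
    have hmem : f x ∈ closure D :=
      subset_closure ⟨Measure.dirac x, dirac_mem_MC f g hf hg S hx⟩
    have h1 : u < L (f x) := hL _ hmem
    have h2 : ∑ i, α i * (f x i - φ i) = L (f x) - L φ := by
      rw [hLsum (f x), hLsum φ, ← Finset.sum_sub_distrib]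
      congr 1; ext i; ring
    rw [h2]; linarith
  · rintro ⟨α, ε, hε, hsep⟩
    set C := {ψ : Fin m → ℝ | ε ≤ ∑ i, α i * (ψ i - φ i)} with hC
    have hCclosed : IsClosed C := by
      have hcont : Continuous fun ψ : Fin m → ℝ => ∑ i, α i * (ψ i - φ i) := by
        fun_prop
      exact isClosed_le continuous_const hcont
    have hDC : D ⊆ C := by
      rintro ψ ⟨μ, hp, hs, hi, he, -⟩
      have hμnull : μ Sᶜ = 0 :=
        measure_mono_null (compl_subset_compl.2 hs) (msupport_compl_null μ)
      set h : (Fin n → ℝ) → ℝ := fun x => ∑ i, α i * (f x i - φ i) with hh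
      have hint : Integrable h μ := by
        apply integrable_finset_sum
        intro i _
        exact (((hi i).sub (integrable_const (φ i))).const_mul (α i))
      have hae : ∀ᵐ x ∂μ, ε ≤ h x := by
        rw [ae_iff]
        refine measure_mono_null (fun x hx => ?_) hμnull
        simp only [mem_setOf_eq, not_le] at hx
        intro hxS
        exact absurd (hsep x hxS) (not_lt.2 hx.le)
      have hge : ε ≤ ∫ x, h x ∂μ := by
        calc ε = ∫ _, ε ∂μ := by simp [hp.measure_univ]
        _ ≤ ∫ x, h x ∂μ := integral_mono_ae (integrable_const ε) hint hae
      have hval : ∫ x, h x ∂μ = ∑ i, α i * (ψ i - φ i) := by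
        have hfs := integral_finset_sum (μ := μ) Finset.univ
          (f := fun i (x : Fin n → ℝ) => α i * (f x i - φ i)) (fun i _ =>
          (((hi i).sub (integrable_const (φ i))).const_mul (α i)))
        rw [hh, hfs]
        congr 1; ext i
        show ∫ a, α i * (f a i - φ i) ∂μ = α i * (ψ i - φ i)
        rw [integral_const_mul, integral_sub (hi i) (integrable_const (φ i)),
          he i, integral_const]
        simp [hp.measure_univ]
      rw [hC, mem_setOf_eq, ← hval]
      exact hge
    intro hmem
    have : φ ∈ C := closure_minimal hDC hCclosed hmem
    simp only [hC, mem_setOf_eq, sub_self, mul_zero, Finset.sum_const_zero] at this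
    linarith
end
end

section
/- Let f₁,…,f_m, g : ℝⁿ → ℝ be Borel measurable, S ⊆ ℝⁿ, and φ ∈ ℝᵐ with φ not in the boundary of D(S) = {ψ ∈ ℝᵐ : M(S,ψ) ≠ ∅}. Then there exists a progressive cover (S_k)_{k≥1} of S such that Γ(S_k) is bounded for every k, and moreover: if φ ∉ closure(D(S)) then φ ∉ closure(D(S_k)) for all k, and if φ ∈ interior(D(S)) then φ ∈ interior(D(S_k)) for all k. -/
/-!
Truncate `S` to `S_R = {x ∈ S | ‖Γ x‖ ≤ R}`; the closure clause is then monotonicity of `D`.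
For the interior clause, condition a measure in `M(S, ψ)` on closed subsets of `S_R` that exhaust
it almost surely: by dominated convergence their moments tend to `ψ`, so `D(S)` lies in the closure
of the increasing union of the convex sets `D(S_R)`. In finite dimension a convex set and its
closure have the same interior, and the vertices of a simplex around `φ` inside `⋃ D(S_R)` all lie
in one `D(S_R)`; the cover starting at that `R` works.
-/

open MeasureTheory Set Filter Topology
open scoped BigOperators ENNReal

noncomputable section

/-- A progressive cover of `S`: a monotone sequence of subsets of `S`
covering `S`. -/
def ProgCover {E : Type*} (S : Set E) (T : ℕ → Set E) : Prop :=
  (∀ i j, i ≤ j → T i ⊆ T j) ∧ (∀ i, T i ⊆ S) ∧ ∀ x ∈ S, ∃ i, x ∈ T i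

/-- The feasible set `D(A)` for a subset `A ⊆ S`. -/
def DD (n m : ℕ) (f : (Fin n → ℝ) → Fin m → ℝ) (g : (Fin n → ℝ) → ℝ)
    (A : Set (Fin n → ℝ)) : Set (Fin m → ℝ) :=
  {ψ | (MC n m f g A ψ).Nonempty}

section FiniteDimensional

variable {E : Type*} [NormedAddCommGroup E] [NormedSpace ℝ E] [FiniteDimensional ℝ E]

-- A convex set with empty interior lies in a proper, hence closed, affine subspace.
theorem Convex.interior_closure_eq_interior {s : Set E} (hs : Convex ℝ s) :
    interior (closure s) = interior s := by
  rcases (interior (closure s)).eq_empty_or_nonempty with h | h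
  · exact subset_antisymm (h ▸ empty_subset _) (interior_mono subset_closure)
  refine hs.interior_closure_eq_interior_of_nonempty_interior ?_
  rw [hs.closure.interior_nonempty_iff_affineSpan_eq_top] at h
  rw [hs.interior_nonempty_iff_affineSpan_eq_top]
  exact top_unique <| h ▸ affineSpan_le.2 <|
    closure_minimal (subset_affineSpan ℝ s) (affineSpan ℝ s).closed_of_finiteDimensional

-- The finitely many vertices of a simplex around `x` all lie in a single `C n`.
theorem Monotone.exists_mem_interior_of_mem_interior_closure_iUnion {C : ℕ → Set E}
    (hmono : Monotone C) (hconv : ∀ n, Convex ℝ (C n)) {x : E}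
    (hx : x ∈ interior (closure (⋃ n, C n))) : ∃ n, x ∈ interior (C n) := by
  rw [(hmono.directed_le.convex_iUnion fun n => hconv n).interior_closure_eq_interior] at hx
  obtain ⟨b, hxb, hbC⟩ := exists_mem_interior_convexHull_affineBasis (mem_interior_iff_mem_nhds.1 hx)
  have hvert : ∀ i, ∀ᶠ n in atTop, b i ∈ C n := fun i => by
    obtain ⟨k, hk⟩ := mem_iUnion.1 (hbC (subset_convexHull ℝ _ (mem_range_self i)))
    exact eventually_atTop.2 ⟨k, fun n hn => hmono hn hk⟩
  obtain ⟨n, hn⟩ := (eventually_all.2 hvert).exists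
  exact ⟨n, interior_mono (convexHull_min (range_subset_iff.2 hn) (hconv n)) hxb⟩

end FiniteDimensional

section Support

variable {X : Type*} [TopologicalSpace X] [MeasurableSpace X]

theorem msupport_add_subset (μ ν : Measure X) : msupport (μ + ν) ⊆ msupport μ ∪ msupport ν := by
  intro x hx
  by_contra h
  simp only [mem_union, msupport, mem_ofPred_eq, not_or, not_forall, not_not] at h
  obtain ⟨⟨U, hU, hxU, hμU⟩, V, hV, hxV, hνV⟩ := h
  refine hx (U ∩ V) (hU.inter hV) ⟨hxU, hxV⟩ ?_
  rw [Measure.add_apply, measure_mono_null inter_subset_left hμU,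
    measure_mono_null inter_subset_right hνV, add_zero]

theorem msupport_smul_subset (c : ℝ≥0∞) (μ : Measure X) : msupport (c • μ) ⊆ msupport μ :=
  fun _ hx U hU hxU hμU => hx U hU hxU (by rw [Measure.smul_apply, hμU, smul_zero])

theorem msupport_restrict_subset [OpensMeasurableSpace X] (μ : Measure X) {F : Set X}
    (hF : IsClosed F) : msupport (μ.restrict F) ⊆ msupport μ ∩ F := by
  intro x hx
  refine ⟨fun U hU hxU hμU => hx U hU hxU ?_, by_contra fun hxF => hx Fᶜ hF.isOpen_compl hxF ?_⟩
  · rw [Measure.restrict_apply hU.measurableSet, measure_mono_null inter_subset_left hμU]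
  · rw [Measure.restrict_apply hF.isOpen_compl.measurableSet, compl_inter_self, measure_empty]

variable [OpensMeasurableSpace X]

-- Borel–Cantelli, with closed sets `F R ⊆ A R` missing at most `2⁻¹ ^ R` of the mass of `A R`.
theorem exists_isClosed_subset_ae_eventually_mem (μ : Measure X) [IsFiniteMeasure μ]
    [μ.WeaklyRegular] {A : ℕ → Set X} (hA : ∀ R, MeasurableSet (A R))
    (hcov : ∀ x, ∀ᶠ R in atTop, x ∈ A R) :
    ∃ F : ℕ → Set X, (∀ R, F R ⊆ A R) ∧ (∀ R, IsClosed (F R)) ∧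
      ∀ᵐ x ∂μ, ∀ᶠ R in atTop, x ∈ F R := by
  choose F hFA hFc hμF using fun R => (hA R).exists_isClosed_sdiff_lt (measure_ne_top μ _)
    (ε := 2⁻¹ ^ R) (pow_ne_zero R (ENNReal.inv_ne_zero.2 ENNReal.ofNat_ne_top))
  have hsum : ∑' R, μ (A R \ F R) ≠ ∞ := by
    refine ne_top_of_le_ne_top ?_ (ENNReal.tsum_le_tsum fun R => (hμF R).le)
    rw [ENNReal.tsum_geometric, ENNReal.one_sub_inv_two, inv_inv]
    exact ENNReal.ofNat_ne_top
  refine ⟨F, hFA, hFc, (ae_eventually_notMem hsum).mono fun x hx => ?_⟩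
  filter_upwards [hx, hcov x] with R hxF hxA
  by_contra h
  exact hxF ⟨hxA, h⟩

end Support

theorem tendsto_setIntegral_of_ae_eventually_mem {X G : Type*} [MeasurableSpace X]
    [NormedAddCommGroup G] [NormedSpace ℝ G] {μ : Measure X} {F : ℕ → Set X}
    (hF : ∀ R, MeasurableSet (F R)) (hae : ∀ᵐ x ∂μ, ∀ᶠ R in atTop, x ∈ F R) {h : X → G}
    (hh : Integrable h μ) :
    Tendsto (fun R => ∫ x in F R, h x ∂μ) atTop (𝓝 (∫ x, h x ∂μ)) := by
  simp_rw [← integral_indicator (hF _)]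
  refine tendsto_integral_of_dominated_convergence (fun x => ‖h x‖)
    (fun R => hh.aestronglyMeasurable.indicator (hF R)) hh.norm
    (fun R => ae_of_all _ fun x => norm_indicator_le_norm_self h x) ?_
  filter_upwards [hae] with x hx
  exact tendsto_const_nhds.congr' (hx.mono fun R hR => (indicator_of_mem hR h).symm)

section Feasible

variable {n m : ℕ} {f : (Fin n → ℝ) → Fin m → ℝ} {g : (Fin n → ℝ) → ℝ}

theorem DD_mono {A B : Set (Fin n → ℝ)} (h : A ⊆ B) : DD n m f g A ⊆ DD n m f g B := by
  rintro ψ ⟨μ, hprob, hsupp, hint, hmean, hg⟩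
  exact ⟨μ, hprob, hsupp.trans h, hint, hmean, hg⟩

theorem convex_DD (A : Set (Fin n → ℝ)) : Convex ℝ (DD n m f g A) := by
  rintro ψ ⟨μ, hμ, hsμ, hiμ, heμ, hgμ⟩ χ ⟨ν, hν, hsν, hiν, heν, hgν⟩ a b ha hb hab
  have ha' : ENNReal.ofReal a ≠ ∞ := ENNReal.ofReal_ne_top
  have hb' : ENNReal.ofReal b ≠ ∞ := ENNReal.ofReal_ne_top
  refine ⟨ENNReal.ofReal a • μ + ENNReal.ofReal b • ν, ⟨?_⟩, ?_, fun i => ?_, fun i => ?_, ?_⟩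
  · simp only [Measure.add_apply, Measure.smul_apply, measure_univ, smul_eq_mul, mul_one]
    rw [← ENNReal.ofReal_add ha hb, hab, ENNReal.ofReal_one]
  · exact (msupport_add_subset _ _).trans <| union_subset
      ((msupport_smul_subset _ μ).trans hsμ) ((msupport_smul_subset _ ν).trans hsν)
  · exact ((hiμ i).smul_measure ha').add_measure ((hiν i).smul_measure hb')
  · rw [integral_add_measure ((hiμ i).smul_measure ha') ((hiν i).smul_measure hb'),
      integral_smul_measure, integral_smul_measure, ENNReal.toReal_ofReal ha,
      ENNReal.toReal_ofReal hb, heμ i, heν i]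
    rfl
  · exact (hgμ.smul_measure ha').add_measure (hgν.smul_measure hb')

theorem smul_restrict_mem_MC {S F : Set (Fin n → ℝ)} {ψ : Fin m → ℝ} {μ : Measure (Fin n → ℝ)}
    (hμ : μ ∈ MC n m f g S ψ) (hF : IsClosed F) (hμF : μ F ≠ 0) :
    (μ F)⁻¹ • μ.restrict F ∈
      MC n m f g (S ∩ F) (fun i => (μ.real F)⁻¹ * ∫ x in F, f x i ∂μ) := by
  obtain ⟨hprob, hsupp, hint, -, hg⟩ := hμ
  have hc : (μ F)⁻¹ ≠ ∞ := ENNReal.inv_ne_top.2 hμF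
  refine ⟨⟨?_⟩, ?_, fun i => (hint i).restrict.smul_measure hc, fun i => ?_,
    hg.restrict.smul_measure hc⟩
  · rw [Measure.smul_apply, Measure.restrict_apply_univ, smul_eq_mul,
      ENNReal.inv_mul_cancel hμF (measure_ne_top μ F)]
  · exact (msupport_smul_subset _ _).trans <|
      (msupport_restrict_subset μ hF).trans (inter_subset_inter_left F hsupp)
  · rw [integral_smul_measure, ENNReal.toReal_inv]
    rfl

-- Condition a feasible measure on closed sets `F R ⊆ A R` exhausting it almost surely; closedness
-- keeps the support of the conditioned measure inside `S ∩ A R`.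
theorem DD_subset_closure_iUnion {S : Set (Fin n → ℝ)} {A : ℕ → Set (Fin n → ℝ)}
    (hA : ∀ R, MeasurableSet (A R)) (hcov : ∀ x, ∀ᶠ R in atTop, x ∈ A R) :
    DD n m f g S ⊆ closure (⋃ R, DD n m f g (S ∩ A R)) := by
  rintro ψ ⟨μ, hμ⟩
  obtain ⟨hprob, -, hint, hmean, -⟩ := id hμ
  obtain ⟨F, hFA, hFc, hae⟩ := exists_isClosed_subset_ae_eventually_mem μ hA hcov
  have hFm : ∀ R, MeasurableSet (F R) := fun R => (hFc R).measurableSet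
  have hmass : Tendsto (fun R => μ.real (F R)) atTop (𝓝 1) := by
    simpa using tendsto_setIntegral_of_ae_eventually_mem hFm hae (integrable_const (1 : ℝ))
  have hmoments : ∀ i, Tendsto (fun R => (μ.real (F R))⁻¹ * ∫ x in F R, f x i ∂μ) atTop
      (𝓝 (ψ i)) := fun i => by
    simpa [hmean i] using
      (hmass.inv₀ one_ne_zero).mul (tendsto_setIntegral_of_ae_eventually_mem hFm hae (hint i))
  refine mem_closure_of_tendsto (tendsto_pi_nhds.2 hmoments) ?_
  filter_upwards [hmass.eventually_ne one_ne_zero] with R hR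
  exact mem_iUnion.2 ⟨R, DD_mono (inter_subset_inter_right S (hFA R))
    ⟨_, smul_restrict_mem_MC hμ (hFc R) fun h => hR (by rw [measureReal_def, h]; rfl)⟩⟩

end Feasible

def boundedPart {n m : ℕ} (f : (Fin n → ℝ) → Fin m → ℝ) (g : (Fin n → ℝ) → ℝ)
    (S : Set (Fin n → ℝ)) (r : ℝ) : Set (Fin n → ℝ) :=
  S ∩ {x | ‖(f x, g x)‖ ≤ r}

section BoundedPart

variable {n m : ℕ} (f : (Fin n → ℝ) → Fin m → ℝ) (g : (Fin n → ℝ) → ℝ) (S : Set (Fin n → ℝ))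

theorem boundedPart_subset (r : ℝ) : boundedPart f g S r ⊆ S := inter_subset_left

theorem boundedPart_mono : Monotone (boundedPart f g S) :=
  fun _ _ hrs => inter_subset_inter_right S fun _ hx => le_trans hx hrs

theorem isBounded_image_boundedPart (r : ℝ) :
    Bornology.IsBounded ((fun x => (f x, g x)) '' boundedPart f g S r) :=
  (Metric.isBounded_closedBall (x := 0) (r := r)).subset <| by
    rintro _ ⟨x, hx, rfl⟩
    exact mem_closedBall_zero_iff.2 hx.2

theorem progCover_boundedPart (R₀ : ℕ) : ProgCover S fun k : ℕ => boundedPart f g S (R₀ + k) := by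
  refine ⟨fun i j hij => boundedPart_mono f g S (by gcongr), fun k => boundedPart_subset f g S _,
    fun x hx => ?_⟩
  obtain ⟨k, hk⟩ := exists_nat_ge ‖(f x, g x)‖
  exact ⟨k, hx, hk.trans (le_add_of_nonneg_left R₀.cast_nonneg)⟩

variable {f g S}

theorem exists_mem_interior_DD_boundedPart (hf : ∀ i, Measurable fun x => f x i)
    (hg : Measurable g) {φ : Fin m → ℝ} (hφ : φ ∈ interior (DD n m f g S)) :
    ∃ R : ℕ, φ ∈ interior (DD n m f g (boundedPart f g S R)) := by
  have hΓ : Measurable fun x => ‖(f x, g x)‖ := ((measurable_pi_lambda _ hf).prodMk hg).norm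
  refine Monotone.exists_mem_interior_of_mem_interior_closure_iUnion
    (fun _ _ h => DD_mono (boundedPart_mono f g S (Nat.cast_le.2 h))) (fun R => convex_DD _)
    (interior_mono (DD_subset_closure_iUnion (fun R => measurableSet_le hΓ measurable_const)
      fun x => ?_) hφ)
  obtain ⟨k, hk⟩ := exists_nat_ge ‖(f x, g x)‖
  exact eventually_atTop.2 ⟨k, fun R hR => hk.trans (Nat.cast_le.2 hR)⟩

end BoundedPart

theorem exists_progressive_cover_bounded_general {n m : ℕ}
    (f : (Fin n → ℝ) → Fin m → ℝ) (g : (Fin n → ℝ) → ℝ)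
    (hf : ∀ i, Measurable fun x => f x i) (hg : Measurable g)
    (S : Set (Fin n → ℝ)) (φ : Fin m → ℝ) :
    ∃ T : ℕ → Set (Fin n → ℝ), ProgCover S T ∧
      (∀ k, Bornology.IsBounded ((fun x => (f x, g x)) '' T k)) ∧
      (φ ∉ closure (DD n m f g S) → ∀ k, φ ∉ closure (DD n m f g (T k))) ∧
      (φ ∈ interior (DD n m f g S) → ∀ k, φ ∈ interior (DD n m f g (T k))) := by
  obtain ⟨R₀, hR₀⟩ : ∃ R₀ : ℕ, φ ∈ interior (DD n m f g S) →
      φ ∈ interior (DD n m f g (boundedPart f g S R₀)) := by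
    by_cases hφ : φ ∈ interior (DD n m f g S)
    · obtain ⟨R₀, hR₀⟩ := exists_mem_interior_DD_boundedPart hf hg hφ
      exact ⟨R₀, fun _ => hR₀⟩
    · exact ⟨0, fun h => absurd h hφ⟩
  refine ⟨fun k => boundedPart f g S (R₀ + k), progCover_boundedPart f g S R₀,
    fun k => isBounded_image_boundedPart f g S _, fun hφ k hk => ?_, fun hφ k => ?_⟩
  · exact hφ (closure_mono (DD_mono (boundedPart_subset f g S _)) hk)
  · exact interior_mono (DD_mono (boundedPart_mono f g S (by simp))) (hR₀ hφ)

/-- existence of a progressive cover with bounded images under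
`Γ` preserving the position of `φ` relative to the feasible sets. -/
theorem exists_progressive_cover_bounded {n m : ℕ}
    (f : (Fin n → ℝ) → Fin m → ℝ) (g : (Fin n → ℝ) → ℝ)
    (hf : ∀ i, Measurable fun x => f x i) (hg : Measurable g)
    (S : Set (Fin n → ℝ)) (φ : Fin m → ℝ)
    (hφ : φ ∉ frontier (DD n m f g S)) :
    ∃ T : ℕ → Set (Fin n → ℝ), ProgCover S T ∧
      (∀ k, Bornology.IsBounded ((fun x => (f x, g x)) '' T k)) ∧
      (φ ∉ closure (DD n m f g S) → ∀ k, φ ∉ closure (DD n m f g (T k))) ∧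
      (φ ∈ interior (DD n m f g S) → ∀ k, φ ∈ interior (DD n m f g (T k))) :=
  exists_progressive_cover_bounded_general f g hf hg S φ
end
end
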